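/- Assume N ≥ 4. Under the permutation null distribution, Cov(R_{1,(a)}, R_{2,(a)}) = (f₁ − p₁q₁)(N − K + |C₀|)² + f₁ · ( −4( N − K + 2|C₀| + ∑_u deg_{C₀}(u)²/(4m(u)) − ∑_u deg_{C₀}(u)/m(u) ) + 6(K − ∑_u 1/m(u)) + ∑_{{u,w} edge of C₀} 1/(m(u)m(w)) ). -/

import Mathlib

/-
Writing `x i = 1[i ∈ S]`, both statistics are quadratic forms in the sample indicators with the
same symmetric, zero-diagonal coefficients `c`: `R₁ = ∑ c i j * x i * x j` and
`R₂ = ∑ c i j * (1 - x i) * (1 - x j)`, where for `i ≠ j` the coefficient `c i j` is `1 / m u` if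
both observations have value `u`, `1 / (2 m u m w)` if their values `u`, `w` are adjacent in `C₀`,
and `0` otherwise. Under the permutation null `E[x i x j] = p₁`, `E[(1 - x k)(1 - x l)] = q₁`, and
`E[x i x j (1 - x k)(1 - x l)]` is `f₁` when `{i, j}` and `{k, l}` are disjoint and `0` otherwise.
Removing the rows and columns of `i` and `j` from `∑ c` then gives
`Cov = f₁ (T² - 4 ∑ᵢ dᵢ² + 2 ∑ c²) - p₁ q₁ T²` with `T = ∑ c` and `dᵢ = ∑ⱼ c i j`, and these three
sums are computed fibrewise over the distinct values.
-/

open Finset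
open scoped BigOperators Classical

open Nat in
theorem Nat.choose_mul_descFactorial_add_add (a b r s : ℕ) :
    (r + s).choose r * (a + b + r + s).descFactorial (a + b)
      = (a + b + r + s).choose (a + r) * (a + r).descFactorial a * (b + s).descFactorial b := by
  apply Nat.eq_of_mul_eq_mul_right (Nat.mul_pos r.factorial_pos s.factorial_pos)
  have hrs := Nat.add_choose_mul_factorial_mul_factorial r s
  rw [← Nat.choose_symm_add] at hrs
  have hN := factorial_mul_descFactorial (show a + b ≤ a + b + r + s by omega)
  have hchoose := choose_mul_factorial_mul_factorial (show a + r ≤ a + b + r + s by omega)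
  have har := factorial_mul_descFactorial (show a ≤ a + r by omega)
  have hbs := factorial_mul_descFactorial (show b ≤ b + s by omega)
  rw [show a + b + r + s - (a + b) = r + s by omega] at hN
  rw [show a + b + r + s - (a + r) = b + s by omega] at hchoose
  rw [Nat.add_sub_cancel_left] at har hbs
  calc _ = (r + s).choose r * r ! * s ! * (a + b + r + s).descFactorial (a + b) := by ring
    _ = _ := by rw [hrs, hN, ← hchoose, ← har, ← hbs]; ring

lemma Nat.cast_descFactorial_four (a : ℕ) :
    (a.descFactorial 4 : ℝ) = a * (a - 1) * (a - 2) * (a - 3) := by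
  rcases a with _ | _ | _ | _ | a <;> norm_num [Nat.descFactorial]
  ring

noncomputable def pairInProb (N n : ℕ) : ℝ := n * (n - 1) / (N * (N - 1))

noncomputable def pairInPairOutProb (N n : ℕ) : ℝ :=
  n * (n - 1) * (N - n : ℕ) * ((N - n : ℕ) - 1) / (N * (N - 1) * (N - 2) * (N - 3))

section UniformSubset

variable {α : Type*} [Fintype α] [DecidableEq α] {n : ℕ}

lemma card_powersetCard_filter_subset_disjoint {A B : Finset α} (hAB : Disjoint A B)
    (hA : #A ≤ n) :
    #{S ∈ powersetCard n univ | A ⊆ S ∧ Disjoint B S}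
      = (Fintype.card α - #A - #B).choose (n - #A) := by
  have hcard : #(A ∪ B)ᶜ = Fintype.card α - #A - #B := by
    rw [card_compl, card_union_of_disjoint hAB, Nat.sub_sub]
  rw [← hcard, ← card_powersetCard]
  refine card_nbij' (· \ A) (· ∪ A) ?_ ?_ ?_ ?_
  · intro S hS
    simp only [mem_coe, mem_filter, mem_powersetCard, subset_univ, true_and] at hS
    simp only [mem_coe, mem_powersetCard, card_sdiff_of_subset hS.2.1, hS.1, and_true]
    intro x hx
    simp only [mem_sdiff] at hx
    simp only [mem_compl, mem_union, not_or]
    exact ⟨hx.2, fun hB => disjoint_left.1 hS.2.2 hB hx.1⟩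
  · intro T hT
    simp only [mem_coe, mem_powersetCard] at hT
    have hTA : Disjoint T A := disjoint_left.2 fun x hx hA => by simpa [hA] using hT.1 hx
    simp only [mem_coe, mem_filter, mem_powersetCard, subset_univ, true_and,
      card_union_of_disjoint hTA, hT.2, subset_union_right, disjoint_union_right]
    refine ⟨by omega, disjoint_left.2 fun x hx hT' => by simpa [hx] using hT.1 hT', hAB.symm⟩
  · intro S hS
    simp only [mem_coe, mem_filter] at hS
    exact sdiff_union_of_subset hS.2.1
  · intro T hT
    simp only [mem_coe, mem_powersetCard] at hT
    exact union_sdiff_cancel_right (disjoint_left.2 fun x hx hA => by simpa [hA] using hT.1 hx)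

-- Stated multiplicatively so that it also covers `n < #A` and `card α - n < #B`, where both
-- sides vanish.
lemma card_powersetCard_filter_subset_disjoint_mul_descFactorial {A B : Finset α}
    (hAB : Disjoint A B) (hn : n ≤ Fintype.card α) :
    #{S ∈ powersetCard n univ | A ⊆ S ∧ Disjoint B S} * (Fintype.card α).descFactorial (#A + #B)
      = (Fintype.card α).choose n * n.descFactorial #A * (Fintype.card α - n).descFactorial #B := by
  by_cases h : #A ≤ n ∧ n + #B ≤ Fintype.card α
  · obtain ⟨r, hr⟩ := Nat.exists_eq_add_of_le h.1
    obtain ⟨s, hs⟩ := Nat.exists_eq_add_of_le h.2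
    rw [card_powersetCard_filter_subset_disjoint hAB h.1, hs, hr,
      show #A + r + #B + s - #A - #B = r + s by omega, show #A + r - #A = r by omega,
      show #A + r + #B + s - (#A + r) = #B + s by omega,
      show #A + r + #B + s = #A + #B + r + s by omega]
    exact Nat.choose_mul_descFactorial_add_add _ _ _ _
  · have hempty : {S ∈ powersetCard n (univ : Finset α) | A ⊆ S ∧ Disjoint B S} = ∅ := by
      refine filter_false_of_mem fun S hS ⟨hAS, hBS⟩ => h ⟨?_, ?_⟩
      · exact (card_le_card hAS).trans (mem_powersetCard.1 hS).2.le
      · have := card_le_card (subset_compl_iff_disjoint_left.2 hBS)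
        rw [card_compl, (mem_powersetCard.1 hS).2] at this
        have := card_le_univ B
        omega
    rw [hempty, card_empty, zero_mul, eq_comm]
    rcases not_and_or.1 h with hA | hB
    · rw [Nat.descFactorial_eq_zero_iff_lt.2 (show n < #A by omega), mul_zero, zero_mul]
    · rw [Nat.descFactorial_eq_zero_iff_lt.2 (show Fintype.card α - n < #B by omega), mul_zero]

lemma expect_powersetCard_subset_disjoint {A B : Finset α} (hAB : Disjoint A B)
    (hn : n ≤ Fintype.card α) :
    𝔼 S ∈ powersetCard n univ, (if A ⊆ S ∧ Disjoint B S then (1 : ℝ) else 0)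
      = n.descFactorial #A * (Fintype.card α - n).descFactorial #B
          / (Fintype.card α).descFactorial (#A + #B) := by
  have hC : ((Fintype.card α).choose n : ℝ) ≠ 0 := by exact_mod_cast (Nat.choose_pos hn).ne'
  have hD : ((Fintype.card α).descFactorial (#A + #B) : ℝ) ≠ 0 := by
    have := card_union_of_disjoint hAB ▸ card_le_univ (A ∪ B)
    exact_mod_cast (Nat.descFactorial_pos.2 this).ne'
  rw [expect_eq_sum_div_card, sum_boole, card_powersetCard, card_univ, div_eq_div_iff hC hD]
  exact_mod_cast (card_powersetCard_filter_subset_disjoint_mul_descFactorial hAB hn).trans (by ring)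

lemma expect_indicator_mul_indicator (hn : n ≤ Fintype.card α) {i j : α} (hij : i ≠ j) :
    𝔼 S ∈ powersetCard n univ, (if i ∈ S then (1 : ℝ) else 0) * (if j ∈ S then 1 else 0)
      = pairInProb (Fintype.card α) n := by
  have h := expect_powersetCard_subset_disjoint (disjoint_empty_right {i, j}) hn
  rw [card_pair hij, card_empty, add_zero, Nat.descFactorial_zero, Nat.cast_one, mul_one,
    Nat.cast_descFactorial_two, Nat.cast_descFactorial_two] at h
  rw [pairInProb, ← h]
  refine expect_congr rfl fun S _ => ?_
  by_cases hi : i ∈ S <;> by_cases hj : j ∈ S <;> simp [hi, hj, insert_subset_iff]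

lemma expect_compl_indicator_mul_compl_indicator (hn : n ≤ Fintype.card α) {i j : α}
    (hij : i ≠ j) :
    𝔼 S ∈ powersetCard n univ, (if i ∈ S then (0 : ℝ) else 1) * (if j ∈ S then 0 else 1)
      = pairInProb (Fintype.card α) (Fintype.card α - n) := by
  have h := expect_powersetCard_subset_disjoint (disjoint_empty_left {i, j}) hn
  rw [card_pair hij, card_empty, zero_add, Nat.descFactorial_zero, Nat.cast_one, one_mul,
    Nat.cast_descFactorial_two, Nat.cast_descFactorial_two] at h
  rw [pairInProb, ← h]
  refine expect_congr rfl fun S _ => ?_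
  by_cases hi : i ∈ S <;> by_cases hj : j ∈ S <;> simp [hi, hj]

lemma expect_indicator_pair_mul_compl_indicator_pair (hn : n ≤ Fintype.card α) {i j k l : α}
    (hij : i ≠ j) (hkl : k ≠ l) :
    𝔼 S ∈ powersetCard n univ, (if i ∈ S then (1 : ℝ) else 0) * (if j ∈ S then 1 else 0)
        * ((if k ∈ S then 0 else 1) * (if l ∈ S then 0 else 1))
      = if Disjoint ({i, j} : Finset α) {k, l} then pairInPairOutProb (Fintype.card α) n
        else 0 := by
  split_ifs with hd
  · have h := expect_powersetCard_subset_disjoint hd hn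
    rw [card_pair hij, card_pair hkl, Nat.cast_descFactorial_two, Nat.cast_descFactorial_two,
      Nat.cast_descFactorial_four] at h
    rw [pairInPairOutProb, mul_assoc _ (_ : ℝ) (_ - 1), ← h]
    refine expect_congr rfl fun S _ => ?_
    by_cases hi : i ∈ S <;> by_cases hj : j ∈ S <;> by_cases hk : k ∈ S <;> by_cases hl : l ∈ S <;>
      simp [hi, hj, hk, hl, insert_subset_iff]
  · refine expect_eq_zero fun S _ => ?_
    obtain ⟨x, hx₁, hx₂⟩ := not_disjoint_iff.1 hd
    simp only [mem_insert, mem_singleton] at hx₁ hx₂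
    by_cases hx : x ∈ S
    · rcases hx₂ with rfl | rfl <;> simp [hx]
    · rcases hx₁ with rfl | rfl <;> simp [hx]

lemma sum_compl_sum_compl {R : Type*} [CommRing R] {c : α → α → R} (hc : ∀ i j, c i j = c j i)
    (P : Finset α) :
    ∑ k ∈ Pᶜ, ∑ l ∈ Pᶜ, c k l
      = ∑ k, ∑ l, c k l - 2 * ∑ p ∈ P, ∑ l, c p l + ∑ p ∈ P, ∑ q ∈ P, c p q := by
  have h (k : α) : ∑ l ∈ Pᶜ, c k l = ∑ l, c k l - ∑ q ∈ P, c k q :=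
    eq_sub_of_add_eq (sum_compl_add_sum P _)
  have hcol : ∑ k, ∑ q ∈ P, c k q = ∑ p ∈ P, ∑ l, c p l := by
    rw [sum_comm]; exact sum_congr rfl fun p _ => sum_congr rfl fun l _ => hc l p
  simp only [h, sum_sub_distrib]
  rw [eq_sub_of_add_eq (sum_compl_add_sum P fun k => ∑ l, c k l),
    eq_sub_of_add_eq (sum_compl_add_sum P fun k => ∑ q ∈ P, c k q), hcol]
  ring

variable {c : α → α → ℝ}

lemma expect_sum_sum_indicator (hn : n ≤ Fintype.card α) (hc : ∀ i, c i i = 0) :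
    𝔼 S ∈ powersetCard n univ,
        ∑ i, ∑ j, c i j * ((if i ∈ S then 1 else 0) * (if j ∈ S then 1 else 0))
      = pairInProb (Fintype.card α) n * ∑ i, ∑ j, c i j := by
  simp only [expect_sum_comm, ← mul_expect, mul_sum]
  refine sum_congr rfl fun i _ => sum_congr rfl fun j _ => ?_
  rcases eq_or_ne i j with rfl | hij
  · simp [hc]
  · rw [expect_indicator_mul_indicator hn hij, mul_comm]

lemma expect_sum_sum_compl_indicator (hn : n ≤ Fintype.card α) (hc : ∀ i, c i i = 0) :
    𝔼 S ∈ powersetCard n univ,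
        ∑ i, ∑ j, c i j * ((if i ∈ S then 0 else 1) * (if j ∈ S then 0 else 1))
      = pairInProb (Fintype.card α) (Fintype.card α - n) * ∑ i, ∑ j, c i j := by
  simp only [expect_sum_comm, ← mul_expect, mul_sum]
  refine sum_congr rfl fun i _ => sum_congr rfl fun j _ => ?_
  rcases eq_or_ne i j with rfl | hij
  · simp [hc]
  · rw [expect_compl_indicator_mul_compl_indicator hn hij, mul_comm]

lemma expect_sum_sum_indicator_mul_sum_sum_compl_indicator (hn : n ≤ Fintype.card α)
    (hc : ∀ i j, c i j = c j i) (hc₀ : ∀ i, c i i = 0) :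
    𝔼 S ∈ powersetCard n univ,
        (∑ i, ∑ j, c i j * ((if i ∈ S then 1 else 0) * (if j ∈ S then 1 else 0)))
          * ∑ k, ∑ l, c k l * ((if k ∈ S then 0 else 1) * (if l ∈ S then 0 else 1))
      = pairInPairOutProb (Fintype.card α) n
          * ((∑ i, ∑ j, c i j) ^ 2 - 4 * ∑ i, (∑ j, c i j) ^ 2 + 2 * ∑ i, ∑ j, c i j ^ 2) := by
  set f := pairInPairOutProb (Fintype.card α) n with hf
  have hpair (i j : α) : c i j * ∑ k, ∑ l, c k l * 𝔼 S ∈ powersetCard n univ,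
        (if i ∈ S then (1 : ℝ) else 0) * (if j ∈ S then 1 else 0)
          * ((if k ∈ S then 0 else 1) * (if l ∈ S then 0 else 1))
      = f * (c i j * (∑ k, ∑ l, c k l) - 2 * (c i j * ∑ l, c i l) - 2 * (c i j * ∑ l, c j l)
          + 2 * c i j ^ 2) := by
    rcases eq_or_ne i j with rfl | hij
    · simp [hc₀]
    have hkl (k l : α) : c k l * 𝔼 S ∈ powersetCard n univ,
          (if i ∈ S then (1 : ℝ) else 0) * (if j ∈ S then 1 else 0)
            * ((if k ∈ S then 0 else 1) * (if l ∈ S then 0 else 1))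
        = if k ∈ ({i, j} : Finset α)ᶜ ∧ l ∈ ({i, j} : Finset α)ᶜ then f * c k l else 0 := by
      rcases eq_or_ne k l with rfl | hkl
      · simp [hc₀]
      rw [expect_indicator_pair_mul_compl_indicator_pair hn hij hkl, ← hf]
      simp only [disjoint_insert_right, disjoint_singleton_right, mem_compl, ite_mul, zero_mul,
        mul_comm (c k l)]
    simp only [hkl, ite_and, sum_ite_irrel, sum_const_zero, sum_ite_mem, univ_inter, ← mul_sum,
      sum_compl_sum_compl hc, sum_pair hij, hc₀, hc j i]
    ring
  have hprod (S : Finset α) :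
      (∑ i, ∑ j, c i j * ((if i ∈ S then 1 else 0) * (if j ∈ S then 1 else 0)))
          * ∑ k, ∑ l, c k l * ((if k ∈ S then 0 else 1) * (if l ∈ S then 0 else 1))
        = ∑ i, ∑ j, c i j * ∑ k, ∑ l, c k l
            * ((if i ∈ S then (1 : ℝ) else 0) * (if j ∈ S then 1 else 0)
              * ((if k ∈ S then 0 else 1) * (if l ∈ S then 0 else 1))) := by
    simp only [sum_mul]
    simp only [mul_sum]
    refine sum_congr rfl fun i _ => sum_congr rfl fun j _ => sum_congr rfl fun k _ =>
      sum_congr rfl fun l _ => by ring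
  have hcol : ∑ i, ∑ j, c i j * ∑ l, c j l = ∑ j, (∑ l, c j l) ^ 2 := by
    rw [sum_comm]
    exact sum_congr rfl fun j _ => by simp only [← sum_mul, sq, hc _ j]
  simp only [hprod, expect_sum_comm, ← mul_expect, hpair, ← mul_sum, sum_add_distrib,
    sum_sub_distrib, ← sum_mul, hcol, ← sq]
  ring

end UniformSubset

lemma expect_sub_mul_sub_expect {ι : Type*} {s : Finset ι} (hs : s.Nonempty) (f g : ι → ℝ) :
    𝔼 i ∈ s, (f i - 𝔼 j ∈ s, f j) * (g i - 𝔼 j ∈ s, g j)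
      = 𝔼 i ∈ s, f i * g i - (𝔼 i ∈ s, f i) * 𝔼 i ∈ s, g i := by
  simp only [sub_mul, mul_sub, expect_sub_distrib, ← expect_mul, ← mul_expect, expect_const hs]
  ring

lemma sum_sum_mul_sum_fiberwise {ι κ R : Type*} [Fintype ι] [Fintype κ] [DecidableEq κ]
    [CommSemiring R] (v : ι → κ) (F : κ → κ → R) (x : ι → R) :
    ∑ u, ∑ w, F u w * ((∑ i with v i = u, x i) * ∑ j with v j = w, x j)
      = ∑ i, ∑ j, F (v i) (v j) * (x i * x j) := by
  calc _ = ∑ u, ∑ w, ∑ i with v i = u, ∑ j with v j = w, F (v i) (v j) * (x i * x j) := by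
        refine sum_congr rfl fun u _ => sum_congr rfl fun w _ => ?_
        rw [sum_mul_sum, mul_sum]
        refine sum_congr rfl fun i hi => ?_
        rw [mul_sum]
        refine sum_congr rfl fun j hj => ?_
        rw [(mem_filter.1 hi).2, (mem_filter.1 hj).2]
    _ = ∑ u, ∑ i with v i = u, ∑ w, ∑ j with v j = w, F (v i) (v j) * (x i * x j) :=
        sum_congr rfl fun u _ => sum_comm
    _ = _ := by simp only [sum_fiberwise]

lemma sum_comp_eq_sum_mul {ι κ : Type*} [Fintype ι] [Fintype κ] [DecidableEq κ] {m : κ → ℕ}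
    {v : ι → κ} (hv : ∀ u, #{i | v i = u} = m u) (F : κ → ℝ) :
    ∑ i, F (v i) = ∑ u, m u * F u := by
  rw [← sum_fiberwise' univ v F]
  simp [hv]

lemma sum_sum_comp_eq_sum_sum_mul {ι κ : Type*} [Fintype ι] [Fintype κ] [DecidableEq κ]
    {m : κ → ℕ} {v : ι → κ} (hv : ∀ u, #{i | v i = u} = m u) (F : κ → κ → ℝ) :
    ∑ i, ∑ j, F (v i) (v j) = ∑ u, ∑ w, m u * (m w * F u w) := by
  rw [sum_comp_eq_sum_mul hv fun u => ∑ j, F u (v j)]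
  exact sum_congr rfl fun u _ => by rw [sum_comp_eq_sum_mul hv, mul_sum]

lemma card_filter_compl {ι κ : Type*} [Fintype ι] [DecidableEq ι] [DecidableEq κ] {m : κ → ℕ}
    {v : ι → κ} (hv : ∀ u, #{i | v i = u} = m u) (S : Finset ι) (u : κ) :
    (#{i ∈ Sᶜ | v i = u} : ℝ) = m u - #{i ∈ S | v i = u} := by
  rw [eq_sub_iff_add_eq, ← Nat.cast_add, ← card_union_of_disjoint
    (disjoint_filter_filter disjoint_compl_left), ← filter_union, union_comm, union_compl, hv]

lemma cast_card_eq_sum {ι κ : Type*} [Fintype ι] [Fintype κ] [DecidableEq κ] {m : κ → ℕ}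
    {v : ι → κ} (hv : ∀ u, #{i | v i = u} = m u) :
    (Fintype.card ι : ℝ) = ∑ u, (m u : ℝ) := by
  simpa using sum_comp_eq_sum_mul hv fun _ => 1

namespace SimpleGraph

variable {V M : Type*} [Fintype V] [AddCommMonoid M] (G : SimpleGraph V) [DecidableRel G.Adj]

lemma two_nsmul_sum_edgeFinset_lift (f : V → V → M) (hf : ∀ u w, f u w = f w u) :
    2 • ∑ e ∈ G.edgeFinset, Sym2.lift ⟨f, hf⟩ e = ∑ u, ∑ w, if G.Adj u w then f u w else 0 := by
  calc 2 • ∑ e ∈ G.edgeFinset, Sym2.lift ⟨f, hf⟩ e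
      = ∑ d : G.Dart, Sym2.lift ⟨f, hf⟩ d.edge := by
        rw [← sum_fiberwise_of_maps_to (g := Dart.edge) (t := G.edgeFinset)
          (fun d _ => by simp), smul_sum]
        refine sum_congr rfl fun e he => ?_
        rw [sum_congr rfl fun d hd => by rw [(mem_filter.1 hd).2], sum_const,
          G.dart_edge_fiber_card e (mem_edgeFinset.1 he)]
    _ = ∑ u, ∑ w, if G.Adj u w then f u w else 0 := by
        rw [← sum_product', ← sum_filter]
        exact sum_bij (fun d _ => d.toProd) (by simp) (fun _ _ _ _ h => Dart.toProd_injective h)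
          (fun p hp => ⟨⟨p, (mem_filter.1 hp).2⟩, mem_univ _, rfl⟩) (fun d _ => rfl)

end SimpleGraph

section AveragingStatistic

variable {ι κ : Type*} [DecidableEq ι] [DecidableEq κ] (m : κ → ℕ) (G : SimpleGraph κ)
  [DecidableRel G.Adj]

noncomputable def averagingKernel (u w : κ) : ℝ :=
  if u = w then (m u : ℝ)⁻¹ else if G.Adj u w then (2 * m u * m w : ℝ)⁻¹ else 0

noncomputable def averagingCoeff (v : ι → κ) (i j : ι) : ℝ :=
  if i = j then 0 else averagingKernel m G (v i) (v j)

variable {m G}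

lemma averagingKernel_comm (u w : κ) : averagingKernel m G u w = averagingKernel m G w u := by
  unfold averagingKernel
  split_ifs <;> simp_all [G.adj_comm, mul_right_comm]

lemma averagingCoeff_comm (v : ι → κ) (i j : ι) :
    averagingCoeff m G v i j = averagingCoeff m G v j i := by
  simp only [averagingCoeff, eq_comm (a := i), averagingKernel_comm (v i)]

lemma averagingCoeff_self (v : ι → κ) (i : ι) : averagingCoeff m G v i i = 0 := if_pos rfl

variable [Fintype κ]

variable (m G) in
noncomputable def averagingStat (g : κ → ℝ) : ℝ :=
  ∑ u, g u * (g u - 1) / m u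
    + ∑ e ∈ G.edgeFinset, Sym2.lift ⟨fun u w => g u * g w / (m u * m w), fun u w => by ring⟩ e

lemma averagingStat_eq_sum_sum_averagingKernel (g : κ → ℝ) :
    averagingStat m G g = ∑ u, ∑ w, averagingKernel m G u w * (g u * g w) - ∑ u, g u / m u := by
  have hedge := G.two_nsmul_sum_edgeFinset_lift (fun u w => g u * g w / (m u * m w))
    (fun u w => by ring)
  have hK (u w : κ) : averagingKernel m G u w * (g u * g w)
      = (if u = w then g u * g w / m u else 0)
        + (if G.Adj u w then g u * g w / (m u * m w) else 0) / 2 := by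
    unfold averagingKernel
    by_cases huw : u = w
    · subst huw; simp [div_eq_inv_mul]
    · by_cases hadj : G.Adj u w <;> simp [huw, hadj]; ring
  simp only [hK, sum_add_distrib, sum_ite_eq, mem_univ, if_true, ← sum_div] at hedge ⊢
  rw [averagingStat, ← hedge, nsmul_eq_mul]
  simp only [mul_sub, mul_one, sub_div, sum_sub_distrib, Nat.cast_ofNat]
  ring

lemma sum_mul_averagingKernel (hm : ∀ u, 0 < m u) (u : κ) :
    ∑ w, m w * averagingKernel m G u w = 1 + G.degree u / (2 * m u) := by
  have hm' (w : κ) : (m w : ℝ) ≠ 0 := by exact_mod_cast (hm w).ne'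
  have h (w : κ) : m w * averagingKernel m G u w
      = (if u = w then 1 else 0) + if G.Adj u w then (2 * m u : ℝ)⁻¹ else 0 := by
    unfold averagingKernel
    by_cases huw : u = w
    · subst huw; simp [hm' u]
    · by_cases hadj : G.Adj u w <;> simp [huw, hadj]; field_simp [hm' w]
  simp [h, sum_add_distrib, sum_ite, ← G.neighborFinset_eq_filter, div_eq_mul_inv]

variable [Fintype ι]

lemma averagingStat_card_filter (v : ι → κ) (T : Finset ι) :
    averagingStat m G (fun u => #{i ∈ T | v i = u})
      = ∑ i, ∑ j, averagingCoeff m G v i j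
          * ((if i ∈ T then 1 else 0) * (if j ∈ T then 1 else 0)) := by
  set x : ι → ℝ := fun i => if i ∈ T then 1 else 0
  change _ = ∑ i, ∑ j, averagingCoeff m G v i j * (x i * x j)
  have hcard (u : κ) : (#{i ∈ T | v i = u} : ℝ) = ∑ i with v i = u, x i := by
    simp only [x, sum_boole, filter_filter, Nat.cast_inj]
    congr 1; ext i; simp [and_comm]
  have hdiag : ∑ u, (∑ i with v i = u, x i) / m u
      = ∑ i, averagingKernel m G (v i) (v i) * (x i * x i) := by
    rw [← sum_fiberwise univ v]
    refine sum_congr rfl fun u _ => ?_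
    rw [sum_div]
    refine sum_congr rfl fun i hi => ?_
    by_cases hiT : i ∈ T <;> simp [x, hiT, averagingKernel, (mem_filter.1 hi).2, div_eq_inv_mul]
  have hsplit (i j : ι) : averagingCoeff m G v i j * (x i * x j)
      = averagingKernel m G (v i) (v j) * (x i * x j)
        - if i = j then averagingKernel m G (v i) (v i) * (x i * x i) else 0 := by
    unfold averagingCoeff
    split_ifs with h <;> simp [h]
  simp only [averagingStat_eq_sum_sum_averagingKernel, hcard, sum_sum_mul_sum_fiberwise, hdiag,
    hsplit, sum_sub_distrib, sum_ite_eq, mem_univ, if_true]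

variable {v : ι → κ}

lemma sum_averagingCoeff (hv : ∀ u, #{i | v i = u} = m u) (hm : ∀ u, 0 < m u) (i : ι) :
    ∑ j, averagingCoeff m G v i j = 1 - 1 / m (v i) + G.degree (v i) / (2 * m (v i)) := by
  have h (j : ι) : averagingCoeff m G v i j
      = averagingKernel m G (v i) (v j) - if i = j then averagingKernel m G (v i) (v i) else 0 := by
    unfold averagingCoeff; split_ifs with h <;> simp [h]
  simp only [h, sum_sub_distrib, sum_ite_eq, mem_univ, if_true,
    sum_comp_eq_sum_mul hv (averagingKernel m G (v i)), sum_mul_averagingKernel hm]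
  simp [averagingKernel]
  ring

lemma sum_sum_averagingCoeff (hv : ∀ u, #{i | v i = u} = m u) (hm : ∀ u, 0 < m u) :
    ∑ i, ∑ j, averagingCoeff m G v i j
      = Fintype.card ι - Fintype.card κ + #G.edgeFinset := by
  have hm' (u : κ) : (m u : ℝ) ≠ 0 := by exact_mod_cast (hm u).ne'
  have hdeg : ∑ u, (G.degree u : ℝ) = 2 * #G.edgeFinset := by
    exact_mod_cast G.sum_degrees_eq_twice_card_edges
  simp only [sum_averagingCoeff hv hm, sum_comp_eq_sum_mul hv
    (fun u => 1 - 1 / (m u : ℝ) + G.degree u / (2 * m u))]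
  have h (u : κ) : (m u : ℝ) * (1 - 1 / m u + G.degree u / (2 * m u))
      = m u - 1 + G.degree u / 2 := by
    field_simp [hm' u]
  simp only [h, sum_add_distrib, sum_sub_distrib, ← sum_div, hdeg, cast_card_eq_sum hv]
  simp

lemma sum_sq_sum_averagingCoeff (hv : ∀ u, #{i | v i = u} = m u) (hm : ∀ u, 0 < m u) :
    ∑ i, (∑ j, averagingCoeff m G v i j) ^ 2
      = Fintype.card ι - 2 * Fintype.card κ + 2 * #G.edgeFinset + ∑ u, 1 / (m u : ℝ)
        - ∑ u, (G.degree u : ℝ) / m u + ∑ u, (G.degree u : ℝ) ^ 2 / (4 * m u) := by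
  have hm' (u : κ) : (m u : ℝ) ≠ 0 := by exact_mod_cast (hm u).ne'
  have hdeg : ∑ u, (G.degree u : ℝ) = 2 * #G.edgeFinset := by
    exact_mod_cast G.sum_degrees_eq_twice_card_edges
  simp only [sum_averagingCoeff hv hm, sum_comp_eq_sum_mul hv
    (fun u => (1 - 1 / (m u : ℝ) + G.degree u / (2 * m u)) ^ 2)]
  have h (u : κ) : (m u : ℝ) * (1 - 1 / m u + G.degree u / (2 * m u)) ^ 2
      = m u - 2 + G.degree u + (1 / m u - G.degree u / m u + G.degree u ^ 2 / (4 * m u)) := by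
    field_simp [hm' u]; ring
  simp only [h, sum_add_distrib, sum_sub_distrib, hdeg, cast_card_eq_sum hv]
  simp
  ring

lemma sum_sum_averagingCoeff_sq (hv : ∀ u, #{i | v i = u} = m u) (hm : ∀ u, 0 < m u) :
    ∑ i, ∑ j, averagingCoeff m G v i j ^ 2
      = Fintype.card κ - ∑ u, 1 / (m u : ℝ)
        + (∑ e ∈ G.edgeFinset, Sym2.lift ⟨fun u w => 1 / ((m u : ℝ) * m w), fun u w => by ring⟩ e)
          / 2 := by
  have hm' (u : κ) : (m u : ℝ) ≠ 0 := by exact_mod_cast (hm u).ne'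
  have hedge := G.two_nsmul_sum_edgeFinset_lift (fun u w => 1 / ((m u : ℝ) * m w))
    (fun u w => by ring)
  have hsplit (i j : ι) : averagingCoeff m G v i j ^ 2
      = averagingKernel m G (v i) (v j) ^ 2
        - if i = j then averagingKernel m G (v i) (v i) ^ 2 else 0 := by
    unfold averagingCoeff; split_ifs with h <;> simp [h]
  have hK (u w : κ) : m u * (m w * averagingKernel m G u w ^ 2)
      = (if u = w then 1 else 0) + (if G.Adj u w then 1 / ((m u : ℝ) * m w) else 0) / 4 := by
    unfold averagingKernel
    by_cases huw : u = w
    · subst huw; field_simp; simp [hm' u]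
    · by_cases hadj : G.Adj u w <;> simp [huw, hadj]; field_simp [hm' u, hm' w]; ring
  have hdiag (u : κ) : m u * averagingKernel m G u u ^ 2 = 1 / m u := by
    simp [averagingKernel]; field_simp
  simp only [hsplit, sum_sub_distrib, sum_ite_eq, mem_univ, if_true,
    sum_sum_comp_eq_sum_sum_mul hv (fun u w => averagingKernel m G u w ^ 2), hK,
    sum_comp_eq_sum_mul hv (fun u => averagingKernel m G u u ^ 2), sum_add_distrib, ← sum_div,
    ← hedge, hdiag]
  simp
  ring

end AveragingStatistic

/-- **part of Lemma 4 of the paper.**  Covariance of the averaging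
within-sample edge-counts under the permutation null distribution. -/
theorem covariance_R1a_R2a
    -- number of distinct values and multiplicities
    (K : ℕ) (m : Fin K → ℕ) (hm : ∀ u, 1 ≤ m u)
    -- total sample size
    (N : ℕ)
    -- value map with prescribed fiber sizes
    (v : Fin N → Fin K)
    (hv : ∀ u, (Finset.univ.filter (fun i => v i = u)).card = m u)
    -- similarity graph on the distinct values
    (C₀ : SimpleGraph (Fin K))
    -- sizes of sample 1 and sample 2
    (n₁ n₂ : ℕ) (hn₁' : n₁ ≤ N - 1) (hn₂ : n₂ = N - n₁)
    -- expectation under the permutation null distribution (uniform over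
    -- all `n₁`-element subsets of `Fin N`)
    (E : (Finset (Fin N) → ℝ) → ℝ)
    (hE : ∀ f, E f =
      (∑ S ∈ Finset.powersetCard n₁ (Finset.univ : Finset (Fin N)), f S) / (N.choose n₁ : ℝ))
    -- within-group counts
    (n1 : Fin K → Finset (Fin N) → ℝ)
    (hn1 : ∀ u S, n1 u S = ((S.filter (fun i => v i = u)).card : ℝ))
    (n2 : Fin K → Finset (Fin N) → ℝ)
    (hn2 : ∀ u S, n2 u S = (m u : ℝ) - n1 u S)
    -- the averaging statistics
    (R1a : Finset (Fin N) → ℝ)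
    (hR1a : ∀ S, R1a S = ∑ u, n1 u S * (n1 u S - 1) / (m u : ℝ)
        + ∑ e ∈ C₀.edgeFinset,
            Sym2.lift ⟨fun u w => n1 u S * n1 w S / ((m u : ℝ) * (m w : ℝ)),
              fun u w => by ring⟩ e)
    (R2a : Finset (Fin N) → ℝ)
    (hR2a : ∀ S, R2a S = ∑ u, n2 u S * (n2 u S - 1) / (m u : ℝ)
        + ∑ e ∈ C₀.edgeFinset,
            Sym2.lift ⟨fun u w => n2 u S * n2 w S / ((m u : ℝ) * (m w : ℝ)),
              fun u w => by ring⟩ e)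
    -- covariance under the permutation null distribution
    (Cov : (Finset (Fin N) → ℝ) → (Finset (Fin N) → ℝ) → ℝ)
    (hCov : ∀ f g, Cov f g = E (fun S => (f S - E f) * (g S - E g)))
    -- the constants p₁, q₁ and f₁
    (p₁ q₁ f₁ : ℝ)
    (hp₁ : p₁ = (n₁ : ℝ) * ((n₁ : ℝ) - 1) / ((N : ℝ) * ((N : ℝ) - 1)))
    (hq₁ : q₁ = (n₂ : ℝ) * ((n₂ : ℝ) - 1) / ((N : ℝ) * ((N : ℝ) - 1)))
    (hf₁ : f₁ = (n₁ : ℝ) * ((n₁ : ℝ) - 1) * (n₂ : ℝ) * ((n₂ : ℝ) - 1) /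
      ((N : ℝ) * ((N : ℝ) - 1) * ((N : ℝ) - 2) * ((N : ℝ) - 3))) :
    Cov R1a R2a = (f₁ - p₁ * q₁) * ((N : ℝ) - (K : ℝ) + (C₀.edgeFinset.card : ℝ)) ^ 2
      + f₁ * ( -4 * ((N : ℝ) - (K : ℝ) + 2 * (C₀.edgeFinset.card : ℝ)
            + (∑ u, (C₀.degree u : ℝ) ^ 2 / (4 * (m u : ℝ)))
            - (∑ u, (C₀.degree u : ℝ) / (m u : ℝ)))
        + 6 * ((K : ℝ) - ∑ u, 1 / (m u : ℝ))
        + (∑ e ∈ C₀.edgeFinset,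
            Sym2.lift ⟨fun u w => 1 / ((m u : ℝ) * (m w : ℝ)), fun u w => by ring⟩ e) ) := by
  subst hn₂
  have hn : n₁ ≤ Fintype.card (Fin N) := by rw [Fintype.card_fin]; omega
  obtain rfl : E = fun f => 𝔼 S ∈ powersetCard n₁ univ, f S := funext fun f => by
    rw [hE, expect_eq_sum_div_card, card_powersetCard, card_univ, Fintype.card_fin]
  obtain rfl : n1 = fun u S => (#{i ∈ S | v i = u} : ℝ) := funext₂ hn1
  obtain rfl : n2 = fun u S => (#{i ∈ Sᶜ | v i = u} : ℝ) :=
    funext₂ fun u S => (hn2 u S).trans (card_filter_compl hv S u).symm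
  have hR1 (S : Finset (Fin N)) : R1a S = ∑ i, ∑ j, averagingCoeff m C₀ v i j
      * ((if i ∈ S then 1 else 0) * (if j ∈ S then 1 else 0)) :=
    (hR1a S).trans (averagingStat_card_filter v S)
  have hR2 (S : Finset (Fin N)) : R2a S = ∑ i, ∑ j, averagingCoeff m C₀ v i j
      * ((if i ∈ S then 0 else 1) * (if j ∈ S then 0 else 1)) := by
    simpa only [mem_compl, ite_not] using (hR2a S).trans (averagingStat_card_filter v Sᶜ)
  have hc := averagingCoeff_comm (m := m) (G := C₀) v
  have hc₀ := averagingCoeff_self (m := m) (G := C₀) v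
  rw [hCov]
  dsimp only
  rw [expect_sub_mul_sub_expect (powersetCard_nonempty.2 (by simpa using hn))]
  simp only [hR1, hR2, expect_sum_sum_indicator_mul_sum_sum_compl_indicator hn hc hc₀,
    expect_sum_sum_indicator hn hc₀, expect_sum_sum_compl_indicator hn hc₀,
    sum_sum_averagingCoeff hv hm, sum_sq_sum_averagingCoeff hv hm,
    sum_sum_averagingCoeff_sq hv hm, Fintype.card_fin, hp₁, hq₁, hf₁, pairInProb,
    pairInPairOutProb]
  ring
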